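/- arXiv:1201.3701 — 2 statements merged into one kernel-verified Lean document; each statement's English description precedes it below -/
import Mathlib

section
/- For every positive integer p, all natural numbers n and k with 0 ≤ k ≤ n, and every real number x, the higher-order Euler polynomials satisfy Σ_{j=0}^{n-k} C(n-k, j) (-1)^j E_{j+k}^{(p)}(x) = (-1)^{n+k+1} Σ_{j=0}^{k} C(k, j) E_{n-j}^{(p)}(x) + 2 (-1)^{n+k} Σ_{j=0}^{k} C(k, j) E_{n-j}^{(p-1)}(x - 1). -/
/-!
Let `A_y = Σ E_m^{(p)}(y) tᵐ/m!`. The generating function gives `A_{y+c} = A_y e^{ct}`, so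
`E^{(p)}(x-1)` is the sequence `m ↦ Δ^m E^{(p)}(x) (0)` of iterated forward differences at `0`,
and `A_{y+1} + A_y = A_y (e^t + 1) = 2 A^{(p-1)}_y`. The left-hand side is
`(-1)^{n-k} Δ^{n-k} E^{(p)}(x)` evaluated at `k`; the Gregory–Newton formula expands it as
`Σ_j C(k,j) Δ^{j+n-k} E^{(p)}(x) (0) = Σ_j C(k,j) E_{n-j}^{(p)}(x-1)`, and eliminating
`E^{(p)}(x-1)` with the recurrence in `p` gives the right-hand side.
-/

open PowerSeries Finset fwdDiff

namespace PowerSeries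

section Egf

variable {K : Type*} [Field K]

def egf (a : ℕ → K) : K⟦X⟧ := mk fun m => a m / m.factorial

theorem egf_add (a b : ℕ → K) : egf (a + b) = egf a + egf b := by
  ext m; simp [egf, add_div]

variable [CharZero K]

theorem egf_injective : Function.Injective (egf (K := K)) := fun a b h => funext fun m => by
  simpa [egf, Nat.factorial_ne_zero] using congrArg (coeff m) h

theorem egf_mul (a b : ℕ → K) :
    egf a * egf b = egf fun m => ∑ j ∈ range (m + 1), (m.choose j : K) * a j * b (m - j) := by
  ext m
  simp only [egf, coeff_mul, coeff_mk, Nat.sum_antidiagonal_eq_sum_range_succ_mk, sum_div]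
  refine sum_congr rfl fun j hj => ?_
  have : (m.factorial : K) ≠ 0 := Nat.cast_ne_zero.mpr m.factorial_ne_zero
  rw [Nat.cast_choose K (Nat.lt_succ_iff.mp (mem_range.mp hj))]
  field_simp

theorem rescale_exp_eq_egf (c : K) : rescale c (exp K) = egf (c ^ ·) := by
  ext m; simp [egf, coeff_exp, div_eq_mul_inv]

theorem exp_add_one_ne_zero : (exp K + 1 : K⟦X⟧) ≠ 0 := fun h => by
  simpa [one_add_one_eq_two] using congrArg constantCoeff h

end Egf

end PowerSeries

section FwdDiff

theorem sum_range_choose_mul_sub {R : Type*} [Semiring R] (f : ℕ → R) {k n : ℕ} (hkn : k ≤ n) :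
    ∑ j ∈ range (k + 1), (k.choose j : R) * f (n - j) =
      ∑ j ∈ range (k + 1), (k.choose j : R) * f (j + (n - k)) := by
  rw [← sum_range_reflect]
  refine sum_congr rfl fun j hj => ?_
  have hjk := Nat.lt_succ_iff.mp (mem_range.mp hj)
  rw [Nat.add_sub_cancel, Nat.choose_symm hjk]
  congr 2
  omega

theorem fwdDiff_iter_eq_sum_choose_fwdDiff_iter_add {R : Type*} [Ring R] (a : ℕ → R) (m k : ℕ) :
    (Δ_[1])^[m] a k = ∑ j ∈ range (k + 1), (k.choose j : R) * (Δ_[1])^[j + m] a 0 := by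
  simpa [Function.iterate_add_apply] using shift_eq_sum_fwdDiff_iter 1 ((Δ_[1])^[m] a) k 0

theorem sum_choose_mul_neg_one_pow_mul_eq_fwdDiff_iter {R : Type*} [CommRing R] (a : ℕ → R)
    (m k : ℕ) :
    ∑ j ∈ range (m + 1), (m.choose j : R) * (-1) ^ j * a (j + k) =
      (-1) ^ m * (Δ_[1])^[m] a k := by
  rw [fwdDiff_iter_eq_sum_shift, mul_sum]
  refine sum_congr rfl fun j hj => ?_
  have hjm := Nat.lt_succ_iff.mp (mem_range.mp hj)
  have hsign : (-1 : R) ^ j = (-1) ^ m * (-1) ^ (m - j) := by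
    rw [← pow_add, show m + (m - j) = j + 2 * (m - j) by omega, pow_add, pow_mul, neg_one_sq,
      one_pow, mul_one]
  simp only [zsmul_eq_mul, smul_eq_mul, mul_one, Int.cast_mul, Int.cast_pow, Int.cast_neg,
    Int.cast_one, Int.cast_natCast, add_comm k, hsign]
  ring

end FwdDiff

section HigherOrderEuler

variable {K : Type*} [Field K] [CharZero K]

/-- `E q y m` is `E_m^{(q)}(y)`, for all orders `q` and arguments `y`. -/
def IsHigherOrderEuler (E : ℕ → K → ℕ → K) : Prop :=
  ∀ q y, egf (E q y) * (exp K + 1) ^ q = 2 ^ q * rescale y (exp K)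

namespace IsHigherOrderEuler

variable {E : ℕ → K → ℕ → K}

theorem egf_add_eq_egf_mul_rescale_exp (hE : IsHigherOrderEuler E) (q : ℕ) (y c : K) :
    egf (E q (y + c)) = egf (E q y) * rescale c (exp K) := by
  apply mul_right_cancel₀ (pow_ne_zero q exp_add_one_ne_zero)
  rw [hE, mul_right_comm, hE, mul_assoc, exp_mul_exp_eq_exp_add]

theorem egf_add_one_add_egf (hE : IsHigherOrderEuler E) (q : ℕ) (y : K) :
    egf (E (q + 1) (y + 1)) + egf (E (q + 1) y) = egf (E q y) + egf (E q y) := by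
  apply mul_right_cancel₀ (pow_ne_zero q exp_add_one_ne_zero)
  calc (egf (E (q + 1) (y + 1)) + egf (E (q + 1) y)) * (exp K + 1) ^ q
      = egf (E (q + 1) y) * (exp K + 1) ^ (q + 1) := by
        rw [hE.egf_add_eq_egf_mul_rescale_exp, rescale_one, RingHom.id_apply]; ring
    _ = (egf (E q y) + egf (E q y)) * (exp K + 1) ^ q := by rw [hE, add_mul, hE]; ring

theorem add_one_add_eq (hE : IsHigherOrderEuler E) (q : ℕ) (y : K) (m : ℕ) :
    E (q + 1) (y + 1) m + E (q + 1) y m = 2 * E q y m := by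
  have h := hE.egf_add_one_add_egf q y
  rw [← egf_add, ← egf_add] at h
  simpa only [Pi.add_apply, ← two_mul] using congrFun (egf_injective h) m

theorem eq_fwdDiff_iter_add_one (hE : IsHigherOrderEuler E) (q : ℕ) (y : K) (m : ℕ) :
    E q y m = (Δ_[1])^[m] (E q (y + 1)) 0 := by
  have h := hE.egf_add_eq_egf_mul_rescale_exp q (y + 1) (-1)
  rw [add_neg_cancel_right, rescale_exp_eq_egf, egf_mul] at h
  rw [congrFun (egf_injective h) m, fwdDiff_iter_eq_sum_shift]
  refine sum_congr rfl fun j _ => ?_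
  simp only [zsmul_eq_mul, smul_eq_mul, mul_one, zero_add, Int.cast_mul, Int.cast_pow,
    Int.cast_neg, Int.cast_one, Int.cast_natCast]
  ring

end IsHigherOrderEuler

end HigherOrderEuler

/-- Kim's identity for the higher-order Euler polynomials `E_n^{(p)}(x)`
(generating function `e^{x t} (2/(e^t+1))^p = Σ E_n^{(p)}(x) tⁿ/n!`,
with `E_n^{(0)}(x) = xⁿ`):
`Σ_{j=0}^{n-k} C(n-k,j) (-1)^j E_{j+k}^{(p)}(x)
  = (-1)^{n+k+1} Σ_{j=0}^{k} C(k,j) E_{n-j}^{(p)}(x)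
    + 2 (-1)^{n+k} Σ_{j=0}^{k} C(k,j) E_{n-j}^{(p-1)}(x-1)`. -/
theorem statement_16 (p : ℕ) (hp : 0 < p) (n k : ℕ) (hkn : k ≤ n) (x : ℝ)
    (E : ℕ → ℝ → ℕ → ℝ)
    (hE : ∀ (q : ℕ) (y : ℝ), (PowerSeries.mk fun m => E q y m / (m.factorial : ℝ)) *
        (PowerSeries.exp ℝ + 1) ^ q =
      (2 : PowerSeries ℝ) ^ q * PowerSeries.rescale y (PowerSeries.exp ℝ)) :
    ∑ j ∈ Finset.range (n - k + 1), ((n - k).choose j : ℝ) * (-1) ^ j * E p x (j + k) =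
      (-1 : ℝ) ^ (n + k + 1) *
          (∑ j ∈ Finset.range (k + 1), (k.choose j : ℝ) * E p x (n - j)) +
        2 * (-1 : ℝ) ^ (n + k) *
          (∑ j ∈ Finset.range (k + 1), (k.choose j : ℝ) * E (p - 1) (x - 1) (n - j)) := by
  have hE : IsHigherOrderEuler E := hE
  obtain ⟨m, rfl⟩ : ∃ m, n = m + k := ⟨n - k, by omega⟩
  obtain ⟨q, rfl⟩ : ∃ q, p = q + 1 := ⟨p - 1, by omega⟩
  have hdiff (i : ℕ) : E (q + 1) (x - 1) i = (Δ_[1])^[i] (E (q + 1) x) 0 := by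
    simpa only [sub_add_cancel] using hE.eq_fwdDiff_iter_add_one (q + 1) (x - 1) i
  have hrec (i : ℕ) : E (q + 1) x i + E (q + 1) (x - 1) i = 2 * E q (x - 1) i := by
    simpa only [sub_add_cancel] using hE.add_one_add_eq q (x - 1) i
  have hsum : ∑ j ∈ range (k + 1), (k.choose j : ℝ) * E (q + 1) x (j + m) +
      ∑ j ∈ range (k + 1), (k.choose j : ℝ) * E (q + 1) (x - 1) (j + m) =
        2 * ∑ j ∈ range (k + 1), (k.choose j : ℝ) * E q (x - 1) (j + m) := by
    rw [← sum_add_distrib, mul_sum]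
    exact sum_congr rfl fun j _ => by rw [← mul_add, hrec]; ring
  have hsign : (-1 : ℝ) ^ (m + k + k) = (-1) ^ m := by
    rw [add_assoc, ← two_mul, pow_add, pow_mul, neg_one_sq, one_pow, mul_one]
  rw [Nat.add_sub_cancel, Nat.add_sub_cancel, sum_choose_mul_neg_one_pow_mul_eq_fwdDiff_iter,
    fwdDiff_iter_eq_sum_choose_fwdDiff_iter_add, sum_range_choose_mul_sub _ (Nat.le_add_left k m),
    sum_range_choose_mul_sub _ (Nat.le_add_left k m), Nat.add_sub_cancel, pow_succ, hsign]
  simp only [← hdiff]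
  linear_combination (-1 : ℝ) ^ m * hsum
end

section
/- (Multivariate Raabe multiplication theorem, Euler case) For every odd positive integer m, every natural number n, every positive integer k, every vector a = (a₁, …, a_k) of nonzero real numbers, and every real number x, m^{-n} · E_n^{(k)}(m x | a) = Σ_{l₁=0}^{m-1} ⋯ Σ_{l_k=0}^{m-1} (-1)^{l₁ + ⋯ + l_k} E_n^{(k)}( x + (1/m) Σ_{i=1}^{k} a_i l_i | a ). -/
/-! Write `F_y(t) = Σ E_n(y | a) tⁿ/n!`, so that `F_y(t) ∏_j (e^{a_j t} + 1) = 2^k e^{y t}`.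
Since `m` is odd, `e^{c t} + 1 = (Σ_{l<m} (-1)^l e^{l c t/m}) (e^{c t/m} + 1)`. Multiplying by
`∏_j (e^{a_j t} + 1)`, both `F_{mx}(t/m)` and `Σ_l (-1)^{|l|} F_{x + ⟨a, l⟩/m}(t)` become
`2^k e^{x t} ∏_j Σ_{l<m} (-1)^l e^{l a_j t/m}`; the product is a nonzero power series, so the two
agree, and comparing coefficients of `tⁿ` gives the theorem. -/

open PowerSeries Finset

lemma Odd.geom_sum_neg_mul_add_one {R : Type*} [CommRing R] {m : ℕ} (hm : Odd m) (u : R) :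
    (∑ l ∈ range m, (-u) ^ l) * (u + 1) = u ^ m + 1 := by
  have h := geom_sum_mul (-u) m
  rw [hm.neg_pow] at h
  linear_combination -h

namespace PowerSeries

lemma rescale_C_apply {R : Type*} [CommSemiring R] (c r : R) : rescale c (C r) = C r := by
  ext n
  rcases n with _ | n <;> simp [coeff_C]

variable {A : Type*} [CommRing A] [Algebra ℚ A]

lemma prod_rescale_exp {ι : Type*} (s : Finset ι) (c : ι → A) :
    ∏ i ∈ s, rescale (c i) (exp A) = rescale (∑ i ∈ s, c i) (exp A) := by
  induction s using Finset.cons_induction with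
  | empty => simp [constantCoeff_exp]
  | cons i s hi ih => rw [prod_cons, sum_cons, ih, exp_mul_exp_eq_exp_add]

lemma rescale_exp_pow (c : A) (l : ℕ) : rescale c (exp A) ^ l = rescale (l * c) (exp A) := by
  rw [← map_pow, exp_pow_eq_rescale_exp, rescale_rescale]

lemma constantCoeff_rescale_exp_add_one (c : A) : constantCoeff (rescale c (exp A) + 1) = 2 := by
  rw [map_add, map_one, ← coeff_zero_eq_constantCoeff_apply, coeff_rescale, coeff_exp]
  norm_num

lemma sum_alternating_rescale_exp_mul {m : ℕ} (hm : Odd m) (c : A) :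
    (∑ l : Fin m, C ((-1 : A) ^ (l : ℕ)) * rescale ((l : A) * c) (exp A)) *
      (rescale c (exp A) + 1) = rescale (m * c) (exp A) + 1 := by
  have hterm (l : ℕ) : C ((-1 : A) ^ l) * rescale ((l : A) * c) (exp A) =
      (-rescale c (exp A)) ^ l := by
    rw [neg_pow (rescale c (exp A)), rescale_exp_pow, map_pow, map_neg, map_one]
  simp only [hterm]
  rw [Fin.sum_univ_eq_sum_range (fun l => (-rescale c (exp A)) ^ l), hm.geom_sum_neg_mul_add_one,
    rescale_exp_pow]

end PowerSeries

section Raabe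

variable {K : Type*} [Field K] [CharZero K] {ι : Type*} [Fintype ι]

lemma prod_rescale_exp_add_one_ne_zero (a : ι → K) :
    ∏ j, (rescale (a j) (exp K) + 1) ≠ 0 := by
  intro h
  have := congrArg constantCoeff h
  simp [map_prod, constantCoeff_rescale_exp_add_one] at this

variable {a : ι → K} {c : K} {F : K → K⟦X⟧}

lemma rescale_inv_mul_prod_rescale_div
    (hF : ∀ y, F y * ∏ j, (rescale (a j) (exp K) + 1) = C c * rescale y (exp K))
    {m : K} (hm : m ≠ 0) (x : K) :
    rescale m⁻¹ (F (m * x)) * ∏ j, (rescale (a j / m) (exp K) + 1) =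
      C c * rescale x (exp K) := by
  have h := congrArg (rescale m⁻¹) (hF (m * x))
  simp only [map_mul, map_prod, map_add, map_one, rescale_C_apply, rescale_rescale] at h
  rw [mul_right_comm, mul_inv_cancel₀ hm, one_mul] at h
  simpa only [div_eq_mul_inv] using h

lemma sum_alternating_mul_prod [DecidableEq ι]
    (hF : ∀ y, F y * ∏ j, (rescale (a j) (exp K) + 1) = C c * rescale y (exp K))
    (m : ℕ) (x : K) :
    (∑ l : ι → Fin m, C ((-1 : K) ^ ∑ i, (l i : ℕ)) *
        F (x + (m : K)⁻¹ * ∑ i, a i * ((l i : ℕ) : K))) *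
        ∏ j, (rescale (a j) (exp K) + 1) =
      C c * rescale x (exp K) *
        ∏ j, ∑ l : Fin m, C ((-1 : K) ^ (l : ℕ)) * rescale ((l : K) * (a j / m)) (exp K) := by
  rw [Fintype.prod_sum, mul_sum, sum_mul]
  refine sum_congr rfl fun l _ => ?_
  rw [mul_assoc, hF, prod_mul_distrib, prod_rescale_exp, ← map_prod, prod_pow_eq_pow_sum,
    mul_sum, ← exp_mul_exp_eq_exp_add]
  simp only [div_eq_mul_inv, mul_comm, mul_left_comm, mul_assoc]

theorem rescale_inv_eq_sum_alternating [DecidableEq ι]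
    (hF : ∀ y, F y * ∏ j, (rescale (a j) (exp K) + 1) = C c * rescale y (exp K))
    {m : ℕ} (hm : Odd m) (x : K) :
    rescale (m : K)⁻¹ (F (m * x)) =
      ∑ l : ι → Fin m, C ((-1 : K) ^ ∑ i, (l i : ℕ)) *
        F (x + (m : K)⁻¹ * ∑ i, a i * ((l i : ℕ) : K)) := by
  have hm0 : (m : K) ≠ 0 := Nat.cast_ne_zero.mpr hm.pos.ne'
  have hfactor (j : ι) : rescale (a j) (exp K) + 1 =
      (∑ l : Fin m, C ((-1 : K) ^ (l : ℕ)) * rescale ((l : K) * (a j / m)) (exp K)) *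
        (rescale (a j / m) (exp K) + 1) := by
    rw [sum_alternating_rescale_exp_mul hm, mul_div_cancel₀ _ hm0]
  apply mul_right_cancel₀ (prod_rescale_exp_add_one_ne_zero a)
  rw [sum_alternating_mul_prod hF, prod_congr rfl fun j _ => hfactor j, prod_mul_distrib,
    mul_left_comm, rescale_inv_mul_prod_rescale_div hF hm0, mul_comm]

end Raabe

theorem statement_18_general (m : ℕ) (hm : Odd m) (n k : ℕ)
    (a : Fin k → ℝ) (x : ℝ) (E : ℝ → ℕ → ℝ)
    (hE : ∀ y : ℝ, (PowerSeries.mk fun i => E y i / (i.factorial : ℝ)) *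
        (∏ j, (PowerSeries.rescale (a j) (PowerSeries.exp ℝ) + 1)) =
      PowerSeries.C ((2 : ℝ) ^ k) * PowerSeries.rescale y (PowerSeries.exp ℝ)) :
    (m : ℝ) ^ (-(n : ℤ)) * E ((m : ℝ) * x) n =
      ∑ l : Fin k → Fin m,
        (-1 : ℝ) ^ (∑ i, (l i : ℕ)) *
          E (x + (1 / (m : ℝ)) * ∑ i, a i * ((l i : ℕ) : ℝ)) n := by
  have h := congrArg (fun f => coeff n f * (n.factorial : ℝ))
    (rescale_inv_eq_sum_alternating hE hm x)
  have hfac : (n.factorial : ℝ) ≠ 0 := Nat.cast_ne_zero.mpr n.factorial_ne_zero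
  simp only [coeff_rescale, coeff_mk, map_sum, coeff_C_mul, sum_mul, mul_assoc,
    div_mul_cancel₀ _ hfac] at h
  simpa only [zpow_neg, zpow_natCast, inv_pow, one_div] using h

/-- Multivariate Raabe multiplication theorem, Euler case (`m` odd):
`m^{-n} E_n^{(k)}(m x | a)
  = Σ_{l₁,…,l_k=0}^{m-1} (-1)^{l₁+⋯+l_k} E_n^{(k)}(x + (1/m) Σ_i a_i l_i | a)`,
where `E_n^{(k)}(x | a)` has generating function `e^{x t} ∏_j (2/(e^{a_j t}+1))`. -/
theorem statement_18 (m : ℕ) (hm0 : 0 < m) (hm : Odd m) (n k : ℕ) (hk : 0 < k)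
    (a : Fin k → ℝ) (ha : ∀ j, a j ≠ 0) (x : ℝ) (E : ℝ → ℕ → ℝ)
    (hE : ∀ y : ℝ, (PowerSeries.mk fun i => E y i / (i.factorial : ℝ)) *
        (∏ j, (PowerSeries.rescale (a j) (PowerSeries.exp ℝ) + 1)) =
      PowerSeries.C ((2 : ℝ) ^ k) * PowerSeries.rescale y (PowerSeries.exp ℝ)) :
    (m : ℝ) ^ (-(n : ℤ)) * E ((m : ℝ) * x) n =
      ∑ l : Fin k → Fin m,
        (-1 : ℝ) ^ (∑ i, (l i : ℕ)) *
          E (x + (1 / (m : ℝ)) * ∑ i, a i * ((l i : ℕ) : ℝ)) n :=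
  statement_18_general m hm n k a x E hE
end
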